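/- Let a < b be reals and let U_n be an (n+1)-dimensional subspace of C^n([a,b],ℝ) possessing a non-negative Bernstein basis p_{n,0},…,p_{n,n}, and let f_0 ∈ U_n be strictly positive on [a,b] with D_{f_0}U_n := { (f/f_0)′ : f ∈ U_n } possessing a non-negative Bernstein basis q_{n-1,0},…,q_{n-1,n-1}. Let f_1 ∈ U_n be such that f_1/f_0 is strictly increasing on [a,b], write f_0 = Σ_{k=0}^n β_{n,k} p_{n,k} and f_1 = Σ_{k=0}^n γ_{n,k} p_{n,k}, and assume β_{n,k} > 0 for all k. Then there exist strictly increasing nodes t_{n,0} < t_{n,1} < ⋯ < t_{n,n} in [a,b] and strictly positive weights α_{n,0},…,α_{n,n} such that the operator B_n f = Σ_{k=0}^n f(t_{n,k}) α_{n,k} p_{n,k} satisfies B_n f_0 = f_0 and B_n f_1 = f_1, if and only if the sequence k ↦ γ_{n,k}/β_{n,k} is strictly increasing. -/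
import Mathlib


open Set Filter Topology

noncomputable section

/-- `p k`, `k = 0, …, n`, is a Bernstein basis of the `(n+1)`-dimensional subspace `U` of
`C^n([a,b], ℝ)`: it is a basis of `U` and each `p k` has a zero of order `k` at `a`
(derivatives of order `< k` vanish at `a`, the `k`-th does not) and a zero of order
`n - k` at `b`. -/
def IsBernsteinBasisOf (a b : ℝ) (n : ℕ) (U : Submodule ℝ (ℝ → ℝ))
    (p : Fin (n + 1) → ℝ → ℝ) : Prop :=
  (∀ k, p k ∈ U) ∧ LinearIndependent ℝ p ∧ Submodule.span ℝ (Set.range p) = U ∧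
  ∀ k : Fin (n + 1),
    (∀ j : ℕ, j < (k : ℕ) → iteratedDeriv j (p k) a = 0) ∧
    iteratedDeriv (k : ℕ) (p k) a ≠ 0 ∧
    (∀ j : ℕ, j < n - (k : ℕ) → iteratedDeriv j (p k) b = 0) ∧
    iteratedDeriv (n - (k : ℕ)) (p k) b ≠ 0

/-- `q k`, `k = 0, …, n-1`, is a Bernstein basis of the `n`-dimensional space
`D_{f₀}U = { (f/f₀)' : f ∈ U }`: every `q k` lies in `D_{f₀}U`, every element of `D_{f₀}U`
lies in the span of the `q k`, the family is linearly independent, and each `q k` has a zero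
of order `k` at `a` and a zero of order `n - 1 - k` at `b`. -/
def IsBernsteinBasisOfD (a b : ℝ) (n : ℕ) (f₀ : ℝ → ℝ) (U : Submodule ℝ (ℝ → ℝ))
    (q : Fin n → ℝ → ℝ) : Prop :=
  (∀ k, ∃ f ∈ U, q k = deriv (fun x => f x / f₀ x)) ∧
  (∀ f ∈ U, deriv (fun x => f x / f₀ x) ∈ Submodule.span ℝ (Set.range q)) ∧
  LinearIndependent ℝ q ∧
  ∀ k : Fin n,
    (∀ j : ℕ, j < (k : ℕ) → iteratedDeriv j (q k) a = 0) ∧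
    iteratedDeriv (k : ℕ) (q k) a ≠ 0 ∧
    (∀ j : ℕ, j < n - 1 - (k : ℕ) → iteratedDeriv j (q k) b = 0) ∧
    iteratedDeriv (n - 1 - (k : ℕ)) (q k) b ≠ 0

/-- Theorem (a) ⟺ (b), strict version: a generalized Bernstein operator with strictly
increasing nodes in `[a,b]` and strictly positive weights fixing `f₀` and `f₁` exists iff
`k ↦ γ k / β k` is strictly increasing. -/
theorem exists_strictMono_nodes_iff_ratio_strictMono
    (n : ℕ) (a b : ℝ) (hab : a < b)
    (U : Submodule ℝ (ℝ → ℝ))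
    (hUdim : Module.finrank ℝ ↥U = n + 1)
    (hUsmooth : ∀ f ∈ U, ContDiff ℝ (n : ℕ∞) f)
    (p : Fin (n + 1) → ℝ → ℝ)
    (hp : IsBernsteinBasisOf a b n U p)
    (hpnn : ∀ k, ∀ x ∈ Set.Icc a b, 0 ≤ p k x)
    (f₀ f₁ : ℝ → ℝ) (hf₀U : f₀ ∈ U) (hf₁U : f₁ ∈ U)
    (hf₀pos : ∀ x ∈ Set.Icc a b, 0 < f₀ x)
    (q : Fin n → ℝ → ℝ)
    (hq : IsBernsteinBasisOfD a b n f₀ U q)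
    (hqnn : ∀ k, ∀ x ∈ Set.Icc a b, 0 ≤ q k x)
    (hmono : StrictMonoOn (fun x => f₁ x / f₀ x) (Set.Icc a b))
    (β γ : Fin (n + 1) → ℝ)
    (hβ : ∀ x, f₀ x = ∑ k, β k * p k x)
    (hγ : ∀ x, f₁ x = ∑ k, γ k * p k x)
    (hβpos : ∀ k, 0 < β k) :
    (∃ (t : Fin (n + 1) → ℝ) (α : Fin (n + 1) → ℝ),
        StrictMono t ∧ (∀ k, t k ∈ Set.Icc a b) ∧ (∀ k, 0 < α k) ∧
        (∀ x, ∑ k, f₀ (t k) * α k * p k x = f₀ x) ∧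
        (∀ x, ∑ k, f₁ (t k) * α k * p k x = f₁ x)) ↔
      StrictMono fun k => γ k / β k := by
    classical
    -- basic facts about values at a and b
    have hp0a : p 0 a ≠ 0 := by
      have := (hp.2.2.2 0).2.1
      simpa [iteratedDeriv_zero] using this
    have hpnb : p (Fin.last n) b ≠ 0 := by
      have := (hp.2.2.2 (Fin.last n)).2.2.2
      simpa [iteratedDeriv_zero] using this
    have hpa : ∀ k : Fin (n + 1), k ≠ 0 → p k a = 0 := by
      intro k hk
      have hk0 : 0 < (k : ℕ) := Nat.pos_of_ne_zero (fun h => hk (Fin.ext h))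
      have := (hp.2.2.2 k).1 0 hk0
      simpa [iteratedDeriv_zero] using this
    have hpb : ∀ k : Fin (n + 1), k ≠ Fin.last n → p k b = 0 := by
      intro k hk
      have hkn : (k : ℕ) < n := by
        have := k.isLt
        by_contra h
        exact hk (Fin.ext (by simp only [Fin.val_last]; omega))
      have := (hp.2.2.2 k).2.2.1 0 (by omega)
      simpa [iteratedDeriv_zero] using this
    have hf₀a : f₀ a = β 0 * p 0 a := by
      rw [hβ a]
      refine Finset.sum_eq_single_of_mem 0 (Finset.mem_univ _) ?_
      intro k _ hk; rw [hpa k hk, mul_zero]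
    have hf₁a : f₁ a = γ 0 * p 0 a := by
      rw [hγ a]
      refine Finset.sum_eq_single_of_mem 0 (Finset.mem_univ _) ?_
      intro k _ hk; rw [hpa k hk, mul_zero]
    have hf₀b : f₀ b = β (Fin.last n) * p (Fin.last n) b := by
      rw [hβ b]
      refine Finset.sum_eq_single_of_mem (Fin.last n) (Finset.mem_univ _) ?_
      intro k _ hk; rw [hpb k hk, mul_zero]
    have hf₁b : f₁ b = γ (Fin.last n) * p (Fin.last n) b := by
      rw [hγ b]
      refine Finset.sum_eq_single_of_mem (Fin.last n) (Finset.mem_univ _) ?_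
      intro k _ hk; rw [hpb k hk, mul_zero]
    have hra : f₁ a / f₀ a = γ 0 / β 0 := by
      rw [hf₁a, hf₀a, mul_div_mul_right _ _ hp0a]
    have hrb : f₁ b / f₀ b = γ (Fin.last n) / β (Fin.last n) := by
      rw [hf₁b, hf₀b, mul_div_mul_right _ _ hpnb]
    constructor
    · rintro ⟨t, α, hts, htmem, hαpos, h0, h1⟩
      have li := Fintype.linearIndependent_iff.mp hp.2.1
      have hβeq : ∀ k, f₀ (t k) * α k = β k := by
        have h := li (fun k => f₀ (t k) * α k - β k) ?_
        · intro k; have := h k; linarith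
        · funext x
          simp only [Finset.sum_apply, Pi.smul_apply, smul_eq_mul, Pi.zero_apply, sub_mul,
            Finset.sum_sub_distrib]
          rw [h0 x, ← hβ x, sub_self]
      have hγeq : ∀ k, f₁ (t k) * α k = γ k := by
        have h := li (fun k => f₁ (t k) * α k - γ k) ?_
        · intro k; have := h k; linarith
        · funext x
          simp only [Finset.sum_apply, Pi.smul_apply, smul_eq_mul, Pi.zero_apply, sub_mul,
            Finset.sum_sub_distrib]
          rw [h1 x, ← hγ x, sub_self]
      have hratio : ∀ k, γ k / β k = f₁ (t k) / f₀ (t k) := by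
        intro k
        rw [← hβeq k, ← hγeq k, mul_div_mul_right _ _ (hαpos k).ne']
      intro j k hjk
      simp only [hratio]
      exact hmono (htmem j) (htmem k) (hts hjk)
    · intro hsm
      have hc0 : ContinuousOn f₀ (Set.Icc a b) :=
        ((hUsmooth f₀ hf₀U).continuous).continuousOn
      have hc1 : ContinuousOn f₁ (Set.Icc a b) :=
        ((hUsmooth f₁ hf₁U).continuous).continuousOn
      have hrc : ContinuousOn (fun x => f₁ x / f₀ x) (Set.Icc a b) :=
        hc1.div hc0 (fun x hx => (hf₀pos x hx).ne')
      have hmem : ∀ k, γ k / β k ∈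
          Set.Icc ((fun x => f₁ x / f₀ x) a) ((fun x => f₁ x / f₀ x) b) := by
        intro k
        simp only [hra, hrb]
        exact ⟨hsm.monotone (Fin.zero_le k), hsm.monotone (Fin.le_last k)⟩
      have hx : ∀ k, ∃ x ∈ Set.Icc a b, f₁ x / f₀ x = γ k / β k := by
        intro k
        have := intermediate_value_Icc hab.le hrc (hmem k)
        obtain ⟨x, hx1, hx2⟩ := this
        exact ⟨x, hx1, hx2⟩
      choose t htmem htval using hx
      refine ⟨t, fun k => β k / f₀ (t k), ?_, htmem, ?_, ?_, ?_⟩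
      · intro j k hjk
        by_contra h
        push_neg at h
        have h1 : f₁ (t k) / f₀ (t k) ≤ f₁ (t j) / f₀ (t j) := by
          rcases lt_or_eq_of_le h with h' | h'
          · exact (hmono (htmem k) (htmem j) h').le
          · rw [h']
        rw [htval j, htval k] at h1
        exact absurd h1 (not_le.mpr (hsm hjk))
      · intro k
        exact div_pos (hβpos k) (hf₀pos _ (htmem k))
      · intro x
        rw [hβ x]
        refine Finset.sum_congr rfl (fun k _ => ?_)
        rw [mul_div_cancel₀ _ (hf₀pos _ (htmem k)).ne']
      · intro x
        rw [hγ x]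
        refine Finset.sum_congr rfl (fun k _ => ?_)
        have : f₁ (t k) * (β k / f₀ (t k)) = f₁ (t k) / f₀ (t k) * β k := by
          ring
        rw [this, htval k, div_mul_cancel₀ _ (hβpos k).ne']
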